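/- Let A₀, A₁, A₂, A₃ be four pairwise skew lines of a regulus (rulings of a common doubly ruled quadric) and φ a plane not containing any of them. Define fᵢ = φ ∩ Aᵢ and g_{i+2} = A_{i+2} ∩ (fᵢ ∨ A_{i+1}) (i.e., the intersection of A_{i+2} with the plane spanned by the point fᵢ and the line A_{i+1}), indices mod 4. Then the four points g₀, g₁, g₂, g₃ are coplanar. -/

import Mathlib

open Submodule

abbrev Subsp (K : Type*) [Field K] := Submodule K (Fin 4 → K)

variable {K : Type*} [Field K]

def isPoint (S : Subsp K) : Prop := Module.finrank K ↥S = 1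
def isLine  (S : Subsp K) : Prop := Module.finrank K ↥S = 2
def isPlane (S : Subsp K) : Prop := Module.finrank K ↥S = 3
def skew (L M : Subsp K) : Prop := L ⊓ M = ⊥
def meets (L M : Subsp K) : Prop := L ⊓ M ≠ ⊥
def regulus4 (A B C D : Subsp K) : Prop :=
  (skew A B ∧ skew A C ∧ skew A D ∧ skew B C ∧ skew B D ∧ skew C D) ∧
  ∀ T : Subsp K, isLine T →
    ((meets T A → meets T B → meets T C → meets T D) ∧
     (meets T A → meets T B → meets T D → meets T C) ∧
     (meets T A → meets T C → meets T D → meets T B) ∧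
     (meets T B → meets T C → meets T D → meets T A))

/-- The intersection points of a plane with four lines of a regulus. -/
def fo (A : Fin 4 → Subsp K) (φ : Subsp K) (i : Fin 4) : Subsp K := φ ⊓ A i

/-- g(i) = A(i) ∩ (f(i-2) ∨ A(i-1)), indices mod 4. -/
def go (A : Fin 4 → Subsp K) (φ : Subsp K) (i : Fin 4) : Subsp K :=
  A i ⊓ (fo A φ (i+2) ⊔ A (i+3))

/-!
In suitable coordinates A₀ = ⟨a, b⟩, A₁ = ⟨c, d⟩, A₂ = ⟨a + c, b + d⟩, and the transversal property
of the regulus forces A₃ = ⟨a + t c, b + t d⟩. Thus Aᵢ = {x pᵢ + y qᵢ}, where (pᵢ, qᵢ) depends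
linearly on a parameter eᵢ ∈ K² (e₀, e₁, e₀ + e₁, e₀ + t e₁), and the lines of the other ruling are
the loci (x : y) = const. The plane fᵢ ∨ A_{i+1} contains the transversal through fᵢ, so g_{i+2}
is the point of A_{i+2} with the same coordinates (x : y) as fᵢ. If φ = ker ℓ, these coordinates
are (-ℓ qᵢ, ℓ pᵢ), so g_{i+2} is spanned by B(eᵢ, e_{i+2}) := ℓ pᵢ • q_{i+2} - ℓ qᵢ • p_{i+2}.
As B is bilinear, B(e₀ + e₁, e₀) + B(e₀ + t e₁, e₁) = B(e₀, e₀ + e₁) + B(e₁, e₀ + t e₁), a linear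
relation g₀ + g₁ = g₂ + g₃ among the four points.
-/

open Module LinearMap

section

variable {V : Type*} [AddCommGroup V] [Module K V]

theorem eq_zero_of_add_eq_zero_of_disjoint {L M : Submodule K V} (h : Disjoint L M) {x y : V}
    (hx : x ∈ L) (hy : y ∈ M) (hxy : x + y = 0) : x = 0 :=
  disjoint_def.mp h x hx (eq_neg_of_add_eq_zero_left hxy ▸ neg_mem hy)

theorem linearIndependent_pair_of_disjoint {L M : Submodule K V} (h : Disjoint L M) {x y : V}
    (hx : x ∈ L) (hy : y ∈ M) (hx0 : x ≠ 0) (hy0 : y ≠ 0) : LinearIndependent K ![x, y] := by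
  refine LinearIndependent.pair_iff.mpr fun s r hsr => ?_
  have hs : s • x = 0 :=
    eq_zero_of_add_eq_zero_of_disjoint h (L.smul_mem s hx) (M.smul_mem r hy) hsr
  have hr : r • y = 0 := by rwa [hs, zero_add] at hsr
  exact ⟨(smul_eq_zero.mp hs).resolve_right hx0, (smul_eq_zero.mp hr).resolve_right hy0⟩

theorem LinearIndependent.pair_add_of_disjoint {L M : Submodule K V} (h : Disjoint L M)
    {p q p' q' : V} (hpq : LinearIndependent K ![p, q]) (hp : p ∈ L) (hq : q ∈ L) (hp' : p' ∈ M)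
    (hq' : q' ∈ M) : LinearIndependent K ![p + p', q + q'] := by
  refine LinearIndependent.pair_iff.mpr fun s r hsr => LinearIndependent.pair_iff.mp hpq s r ?_
  refine eq_zero_of_add_eq_zero_of_disjoint h (add_mem (L.smul_mem s hp) (L.smul_mem r hq))
    (add_mem (M.smul_mem s hp') (M.smul_mem r hq')) ?_
  linear_combination (norm := module) hsr

theorem LinearIndependent.pair_add_ne_zero {x y : V} (h : LinearIndependent K ![x, y]) :
    x + y ≠ 0 := fun hxy =>
  one_ne_zero (LinearIndependent.pair_iff.mp h 1 1 (by simpa using hxy)).1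

theorem finrank_span_pair {p q : V} (h : LinearIndependent K ![p, q]) :
    finrank K (span K {p, q}) = 2 := by
  have := finrank_span_eq_card h
  rwa [Matrix.range_cons_cons_empty, Fintype.card_fin] at this

theorem span_pair_eq_of_finrank_eq_two {A : Submodule K V} (hA : finrank K A = 2) {p q : V}
    (hp : p ∈ A) (hq : q ∈ A) (hpq : LinearIndependent K ![p, q]) : span K {p, q} = A :=
  have : Module.Finite K A := Module.finite_of_finrank_eq_succ hA
  eq_of_le_of_finrank_le (span_le.mpr (Set.insert_subset hp (Set.singleton_subset_iff.mpr hq)))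
    (by rw [hA, finrank_span_pair hpq])

theorem exists_span_pair_eq_of_finrank_eq_two {A : Submodule K V} (hA : finrank K A = 2) :
    ∃ p q : V, LinearIndependent K ![p, q] ∧ span K {p, q} = A := by
  have : Module.Finite K A := Module.finite_of_finrank_eq_succ hA
  let B := finBasisOfFinrankEq K A hA
  have hB : ![(B 0 : V), B 1] = A.subtype ∘ B := by
    ext i; fin_cases i <;> rfl
  have hli : LinearIndependent K ![(B 0 : V), B 1] :=
    hB ▸ B.linearIndependent.map' A.subtype A.ker_subtype
  exact ⟨_, _, hli, span_pair_eq_of_finrank_eq_two hA (B 0).2 (B 1).2 hli⟩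

theorem exists_span_pair_add_eq [FiniteDimensional K V] (hV : finrank K V = 4)
    {L M N : Submodule K V} (hL : finrank K L = 2) (hM : finrank K M = 2) (hN : finrank K N = 2)
    (hLM : Disjoint L M) (hLN : Disjoint L N) (hMN : Disjoint M N) :
    ∃ a b c d : V, LinearIndependent K ![a, b] ∧ LinearIndependent K ![c, d] ∧
      span K {a, b} = L ∧ span K {c, d} = M ∧ span K {a + c, b + d} = N := by
  obtain ⟨a, b, hab, rfl⟩ := exists_span_pair_eq_of_finrank_eq_two hL
  have hNM : N ⊔ M = ⊤ := eq_top_of_disjoint N M (by omega) hMN.symm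
  have hcomplement : ∀ x : V, ∃ y ∈ M, x + y ∈ N := fun x => by
    obtain ⟨n, hn, m, hm, rfl⟩ := mem_sup.mp (hNM ▸ mem_top : x ∈ N ⊔ M)
    exact ⟨-m, neg_mem hm, by simpa using hn⟩
  obtain ⟨c, hc, hac⟩ := hcomplement a
  obtain ⟨d, hd, hbd⟩ := hcomplement b
  have ha : a ∈ span K {a, b} := subset_span (by simp)
  have hb : b ∈ span K {a, b} := subset_span (by simp)
  have hacbd : LinearIndependent K ![a + c, b + d] := hab.pair_add_of_disjoint hLM ha hb hc hd
  have hcd : LinearIndependent K ![c, d] := by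
    simpa using hacbd.pair_add_of_disjoint hLN.symm hac hbd (neg_mem ha) (neg_mem hb)
  exact ⟨a, b, c, d, hab, hcd, rfl, span_pair_eq_of_finrank_eq_two hM hc hd hcd,
    span_pair_eq_of_finrank_eq_two hN hac hbd hacbd⟩

theorem exists_ker_eq_of_finrank_add_one [FiniteDimensional K V] {φ : Submodule K V}
    (hφ : finrank K φ + 1 = finrank K V) : ∃ ℓ : V →ₗ[K] K, ker ℓ = φ := by
  obtain ⟨ℓ, hℓ, hle⟩ := φ.exists_le_ker_of_lt_top (lt_top_of_finrank_lt_finrank (by omega))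
  refine ⟨ℓ, (eq_of_le_of_finrank_le hle ?_).symm⟩
  have := (ker ℓ).finrank_lt (by rwa [ne_eq, ker_eq_top])
  omega

theorem inf_span_singleton_sup_le {L M : Submodule K V} (h : Disjoint L M) {u w : V} (c : K)
    (hw : w ∈ L) (hu : u - c • w ∈ M) : L ⊓ (K ∙ u ⊔ M) ≤ K ∙ w := by
  rintro x ⟨hxL, hx⟩
  obtain ⟨y, hy, m, hm, rfl⟩ := mem_sup.mp hx
  obtain ⟨s, rfl⟩ := mem_span_singleton.mp hy
  have hM : s • u + m - (s * c) • w ∈ M := by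
    convert add_mem (M.smul_mem s hu) hm using 1; module
  have := disjoint_def.mp h _ (sub_mem hxL (L.smul_mem _ hw)) hM
  exact mem_span_singleton.mpr ⟨s * c, (sub_eq_zero.mp this).symm⟩

theorem ker_inf_span_pair_le {ℓ : V →ₗ[K] K} {p q : V} (h : ¬ span K {p, q} ≤ ker ℓ) :
    ker ℓ ⊓ span K {p, q} ≤ K ∙ (ℓ p • q - ℓ q • p) := by
  rintro x ⟨hxℓ, hx⟩
  obtain ⟨s, r, rfl⟩ := mem_span_pair.mp hx
  have hsr : s * ℓ p + r * ℓ q = 0 := by simpa using hxℓ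
  rw [mem_span_singleton]
  by_cases hp : ℓ p = 0
  · have hq : ℓ q ≠ 0 := fun hq => h (span_le.mpr (by simp [Set.insert_subset_iff, hp, hq]))
    have hr : r = 0 := by simpa [hp, hq] using hsr
    refine ⟨-(s / ℓ q), ?_⟩
    have e : -(s / ℓ q) * ℓ q = -s := by field_simp
    rw [smul_sub, smul_smul, smul_smul, e, hp, hr]
    module
  · refine ⟨r / ℓ p, ?_⟩
    have e₁ : r / ℓ p * ℓ p = r := div_mul_cancel₀ r hp
    have e₂ : r / ℓ p * ℓ q = -s := by field_simp; linear_combination hsr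
    rw [smul_sub, smul_smul, smul_smul, e₁, e₂]
    module

/-- Projection from `M` onto `L` sends `x • p + y • q` to `c • (x • p' + y • q')`, so the plane
through `M` and the point `ker ℓ ⊓ ⟨p, q⟩` meets `L` in the point with the same coordinates. -/
theorem inf_ker_inf_span_pair_sup_le {ℓ : V →ₗ[K] K} {L M : Submodule K V} (hLM : Disjoint L M)
    {p q p' q' : V} (h : ¬ span K {p, q} ≤ ker ℓ) (hp' : p' ∈ L) (hq' : q' ∈ L) (c : K)
    (hp : p - c • p' ∈ M) (hq : q - c • q' ∈ M) :
    L ⊓ (ker ℓ ⊓ span K {p, q} ⊔ M) ≤ K ∙ (ℓ p • q' - ℓ q • p') := by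
  refine (inf_le_inf_left L (sup_le_sup_right (ker_inf_span_pair_le h) M)).trans
    (inf_span_singleton_sup_le hLM c (sub_mem (L.smul_mem _ hq') (L.smul_mem _ hp')) ?_)
  convert sub_mem (M.smul_mem (ℓ p) hq) (M.smul_mem (ℓ q) hp) using 1
  module

theorem finrank_sup_span_singleton_le_three {x y z w : V} (h : x + y = z + w) :
    finrank K ↥(K ∙ x ⊔ K ∙ y ⊔ K ∙ z ⊔ K ∙ w) ≤ 3 := by
  have hw : w ∈ K ∙ x ⊔ K ∙ y ⊔ K ∙ z := by
    rw [eq_sub_of_add_eq' h.symm]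
    exact sub_mem (add_mem (mem_sup_left (mem_sup_left (mem_span_singleton_self x)))
      (mem_sup_left (mem_sup_right (mem_span_singleton_self y))))
      (mem_sup_right (mem_span_singleton_self z))
  classical
  rw [sup_eq_left.mpr ((span_singleton_le_iff_mem _ _).mpr hw), sup_assoc, ← span_insert,
    ← span_insert]
  have := finrank_span_finset_le_card (R := K) ({x, y, z} : Finset V)
  rw [Finset.coe_insert, Finset.coe_insert, Finset.coe_singleton] at this
  exact this.trans Finset.card_le_three

end

theorem skew_iff_disjoint {L M : Subsp K} : skew L M ↔ Disjoint L M := disjoint_iff.symm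

theorem exists_add_smul_mem_of_regulus4 {A : Fin 4 → Subsp K}
    (hreg : regulus4 (A 0) (A 1) (A 2) (A 3)) {x y : Fin 4 → K} (hx : x ∈ A 0) (hy : y ∈ A 1)
    (hxy : x + y ∈ A 2) (hind : LinearIndependent K ![x, y]) : ∃ s : K, x + s • y ∈ A 3 := by
  have meets_of_mem : ∀ {v : Fin 4 → K} {B : Subsp K}, v ∈ span K {x, y} → v ∈ B → v ≠ 0 →
      meets (span K {x, y}) B := fun hvT hvB hv =>
    (Submodule.ne_bot_iff _).mpr ⟨_, ⟨hvT, hvB⟩, hv⟩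
  have hT3 : meets (span K {x, y}) (A 3) :=
    ((hreg.2 _ (finrank_span_pair hind)).1
      (meets_of_mem (subset_span (by simp)) hx (hind.ne_zero 0))
      (meets_of_mem (subset_span (by simp)) hy (hind.ne_zero 1))
      (meets_of_mem (add_mem (subset_span (by simp)) (subset_span (by simp))) hxy
        hind.pair_add_ne_zero))
  obtain ⟨v, ⟨hvT, hv3⟩, hv0⟩ := (Submodule.ne_bot_iff _).mp hT3
  obtain ⟨α, β, rfl⟩ := mem_span_pair.mp hvT
  have hα : α ≠ 0 := by
    rintro rfl
    refine hv0 (disjoint_def.mp (skew_iff_disjoint.mp hreg.1.2.2.2.2.1) _ ?_ hv3)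
    simpa using (A 1).smul_mem β hy
  refine ⟨α⁻¹ * β, ?_⟩
  convert (A 3).smul_mem α⁻¹ hv3 using 1
  rw [smul_add, smul_smul, smul_smul, inv_mul_cancel₀ hα, one_smul]

theorem exists_common_add_smul_mem_of_regulus4 {A : Fin 4 → Subsp K}
    (hreg : regulus4 (A 0) (A 1) (A 2) (A 3)) {a b c d : Fin 4 → K}
    (hab : LinearIndependent K ![a, b]) (hcd : LinearIndependent K ![c, d]) (ha : a ∈ A 0)
    (hb : b ∈ A 0) (hc : c ∈ A 1) (hd : d ∈ A 1) (hac : a + c ∈ A 2) (hbd : b + d ∈ A 2) :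
    ∃ t : K, a + t • c ∈ A 3 ∧ b + t • d ∈ A 3 := by
  have h01 := skew_iff_disjoint.mp hreg.1.1
  have h13 := skew_iff_disjoint.mp hreg.1.2.2.2.2.1
  obtain ⟨t₁, h₁⟩ := exists_add_smul_mem_of_regulus4 hreg ha hc hac
    (linearIndependent_pair_of_disjoint h01 ha hc (hab.ne_zero 0) (hcd.ne_zero 0))
  obtain ⟨t₂, h₂⟩ := exists_add_smul_mem_of_regulus4 hreg hb hd hbd
    (linearIndependent_pair_of_disjoint h01 hb hd (hab.ne_zero 1) (hcd.ne_zero 1))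
  obtain ⟨t₃, h₃⟩ := exists_add_smul_mem_of_regulus4 hreg (add_mem ha hb) (add_mem hc hd)
    (by convert add_mem hac hbd using 1; abel)
    (linearIndependent_pair_of_disjoint h01 (add_mem ha hb) (add_mem hc hd)
      hab.pair_add_ne_zero hcd.pair_add_ne_zero)
  have hzero : (t₃ - t₁) • c + (t₃ - t₂) • d = 0 :=
    disjoint_def.mp h13 _ (add_mem ((A 1).smul_mem _ hc) ((A 1).smul_mem _ hd))
      (by convert sub_mem (sub_mem h₃ h₁) h₂ using 1; module)
  obtain ⟨e₁, e₂⟩ := LinearIndependent.pair_iff.mp hcd _ _ hzero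
  refine ⟨t₃, ?_, ?_⟩
  · rwa [sub_eq_zero.mp e₁]
  · rwa [sub_eq_zero.mp e₂]

theorem exists_regulus4_eq {A : Fin 4 → Subsp K} (hA : ∀ i, isLine (A i))
    (hreg : regulus4 (A 0) (A 1) (A 2) (A 3)) :
    ∃ (a b c d : Fin 4 → K) (t : K), t ≠ 0 ∧ t ≠ 1 ∧
      A = ![span K {a, b}, span K {c, d}, span K {a + c, b + d},
        span K {a + t • c, b + t • d}] := by
  obtain ⟨h01, h02, h03, h12, -, h23⟩ := hreg.1
  simp only [skew_iff_disjoint] at h01 h02 h03 h12 h23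
  obtain ⟨a, b, c, d, hab, hcd, hA0, hA1, hA2⟩ :=
    exists_span_pair_add_eq (finrank_fin_fun K) (hA 0) (hA 1) (hA 2) h01 h02 h12
  have ha : a ∈ A 0 := hA0 ▸ subset_span (by simp)
  have hb : b ∈ A 0 := hA0 ▸ subset_span (by simp)
  have hc : c ∈ A 1 := hA1 ▸ subset_span (by simp)
  have hd : d ∈ A 1 := hA1 ▸ subset_span (by simp)
  have hac : a + c ∈ A 2 := hA2 ▸ subset_span (by simp)
  have hbd : b + d ∈ A 2 := hA2 ▸ subset_span (by simp)
  obtain ⟨t, hac3, hbd3⟩ :=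
    exists_common_add_smul_mem_of_regulus4 hreg hab hcd ha hb hc hd hac hbd
  refine ⟨a, b, c, d, t, ?_, ?_, ?_⟩
  · rintro rfl
    exact hab.ne_zero 0 (disjoint_def.mp h03 a ha (by simpa using hac3))
  · rintro rfl
    refine hab.ne_zero 0 (eq_zero_of_add_eq_zero_of_disjoint h01 ha hc ?_)
    exact disjoint_def.mp h23 _ hac (by simpa using hac3)
  · ext1 i
    fin_cases i
    exacts [hA0.symm, hA1.symm, hA2.symm, (span_pair_eq_of_finrank_eq_two (hA 3) hac3 hbd3
      (hab.pair_add_of_disjoint h01 ha hb ((A 1).smul_mem t hc) ((A 1).smul_mem t hd))).symm]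

theorem regulus_plane_section_coplanarity_general
    (A : Fin 4 → Subsp K) (hA : ∀ i, isLine (A i))
    (hreg : regulus4 (A 0) (A 1) (A 2) (A 3))
    (φ : Subsp K) (hφ : isPlane φ) (hni : ∀ i, ¬ A i ≤ φ) :
    Module.finrank K ↥(go A φ 0 ⊔ go A φ 1 ⊔ go A φ 2 ⊔ go A φ 3) ≤ 3 := by
  obtain ⟨a, b, c, d, t, ht0, ht1, rfl⟩ := exists_regulus4_eq hA hreg
  obtain ⟨ℓ, rfl⟩ := exists_ker_eq_of_finrank_add_one (φ := φ) (by rw [hφ, finrank_fin_fun])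
  obtain ⟨⟨h01, -, h03, h12, -, h23⟩, -⟩ := hreg
  simp only [skew_iff_disjoint] at h01 h03 h12 h23
  have ht1' : t - 1 ≠ 0 := sub_ne_zero.mpr ht1
  have hg0 : go _ (ker ℓ) 0 ≤ K ∙ (ℓ (a + c) • b - ℓ (b + d) • a) :=
    inf_ker_inf_span_pair_sup_le h03 (hni 2) (subset_span (by simp)) (subset_span (by simp))
      (1 - t⁻¹)
      (mem_span_pair.mpr ⟨t⁻¹, 0, by linear_combination (norm := module) (inv_mul_cancel₀ ht0) • c⟩)
      (mem_span_pair.mpr ⟨0, t⁻¹, by linear_combination (norm := module) (inv_mul_cancel₀ ht0) • d⟩)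
  have hg1 : go _ (ker ℓ) 1 ≤ K ∙ (ℓ (a + t • c) • d - ℓ (b + t • d) • c) :=
    inf_ker_inf_span_pair_sup_le h01.symm (hni 3) (subset_span (by simp)) (subset_span (by simp))
      t (mem_span_pair.mpr ⟨1, 0, by module⟩) (mem_span_pair.mpr ⟨0, 1, by module⟩)
  have hg2 : go _ (ker ℓ) 2 ≤ K ∙ (ℓ a • (b + d) - ℓ b • (a + c)) :=
    inf_ker_inf_span_pair_sup_le h12.symm (hni 0) (subset_span (by simp)) (subset_span (by simp))
      1 (mem_span_pair.mpr ⟨-1, 0, by module⟩) (mem_span_pair.mpr ⟨0, -1, by module⟩)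
  have hg3 : go _ (ker ℓ) 3 ≤ K ∙ (ℓ c • (b + t • d) - ℓ d • (a + t • c)) :=
    inf_ker_inf_span_pair_sup_le h23.symm (hni 1) (subset_span (by simp)) (subset_span (by simp))
      (t - 1)⁻¹
      (mem_span_pair.mpr ⟨-(t - 1)⁻¹, 0,
        by linear_combination (norm := module) (inv_mul_cancel₀ ht1') • c⟩)
      (mem_span_pair.mpr ⟨0, -(t - 1)⁻¹,
        by linear_combination (norm := module) (inv_mul_cancel₀ ht1') • d⟩)
  refine (finrank_mono (sup_le_sup (sup_le_sup (sup_le_sup hg0 hg1) hg2) hg3)).trans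
    (finrank_sup_span_singleton_le_three ?_)
  simp only [map_add, map_smul, smul_eq_mul]
  module

/-- Given four pairwise skew lines of a regulus and a plane φ meeting them in
points f(i), the four points g(i+2) = A(i+2) ∩ (f(i) ∨ A(i+1)) are coplanar. -/
theorem regulus_plane_section_coplanarity (h2 : (2 : K) ≠ 0)
    (A : Fin 4 → Subsp K) (hA : ∀ i, isLine (A i))
    (hreg : regulus4 (A 0) (A 1) (A 2) (A 3))
    (φ : Subsp K) (hφ : isPlane φ) (hni : ∀ i, ¬ A i ≤ φ) :
    Module.finrank K ↥(go A φ 0 ⊔ go A φ 1 ⊔ go A φ 2 ⊔ go A φ 3) ≤ 3 :=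
  regulus_plane_section_coplanarity_general A hA hreg φ hφ hni
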